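/- arXiv:1705.00167 — 2 statements merged into one kernel-verified Lean document; each statement's English description precedes it below -/
import Mathlib

section
/- Let σ: 𝒜 → ℬ⁺ be a non-erasing morphism between finite alphabets. If the rank of the incidence matrix M_σ equals |𝒜|, or if |𝒜| = 2 and the image σ(𝒜^ℤ) contains at least two points, then σ is injective on 𝒜^ℤ. -/
open scoped BigOperators

namespace Recog

variable {A B C : Type*}

/-- A morphism assigning a word to each letter is non-erasing if every image is nonempty. -/
def NonErasing (σ : A → List B) : Prop := ∀ a, σ a ≠ []

/-- Apply a morphism letterwise to a finite word, concatenating the images. -/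
def wordApply (σ : A → List B) : List A → List B
  | [] => []
  | a :: w => σ a ++ wordApply σ w

/-- Composition of morphisms `τ ∘ σ`. -/
def comp (τ : B → List C) (σ : A → List B) : A → List C := fun a => wordApply τ (σ a)

/-- The `ℓ`-th cutting point of the representation `(0, x)`:
`|σ(x_[0,ℓ))|` for `ℓ ≥ 0` and `-|σ(x_[ℓ,0))|` for `ℓ < 0`. -/
def cut (σ : A → List B) (x : ℤ → A) (ℓ : ℤ) : ℤ :=
  if 0 ≤ ℓ then ∑ i ∈ Finset.range ℓ.toNat, ((σ (x i)).length : ℤ)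
  else -∑ i ∈ Finset.range (-ℓ).toNat, ((σ (x (-(i : ℤ) - 1))).length : ℤ)

/-- `y` is the bi-infinite image `σ(x)`, where `σ(x₀)` starts at position `0`. -/
def IsSubstPt (σ : A → List B) (x : ℤ → A) (y : ℤ → B) : Prop :=
  ∀ (ℓ : ℤ) (j : ℕ) (hj : j < (σ (x ℓ)).length),
    y (cut σ x ℓ + j) = (σ (x ℓ)).get ⟨j, hj⟩

/-- `(k, x)` is a `σ`-representation of `y`, i.e. `y = T^k σ(x)`. -/
def IsRep (σ : A → List B) (y : ℤ → B) (k : ℤ) (x : ℤ → A) : Prop :=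
  IsSubstPt σ x fun n => y (n - k)

/-- `(k, x)` is a centered `σ`-representation of `y`: `y = T^k σ(x)` with `0 ≤ k < |σ(x₀)|`. -/
def IsCenteredRep (σ : A → List B) (y : ℤ → B) (k : ℤ) (x : ℤ → A) : Prop :=
  IsRep σ y k x ∧ 0 ≤ k ∧ k < ((σ (x 0)).length : ℤ)

/-- `y` is aperiodic: `T^p y ≠ y` for all `p ≥ 1`. -/
def Aperiodic (y : ℤ → B) : Prop := ∀ p : ℕ, 1 ≤ p → (fun n => y (n + p)) ≠ y

/-- `y` is periodic: `T^p y = y` for some `p ≥ 1`. -/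
def Periodic (y : ℤ → B) : Prop := ∃ p : ℕ, 1 ≤ p ∧ (fun n => y (n + p)) = y

/-- The set of `σ`-cutting points of the representation `(k, x)`. -/
def cutSet (σ : A → List B) (x : ℤ → A) (k : ℤ) : Set ℤ :=
  {m : ℤ | ∃ ℓ : ℤ, m = cut σ x ℓ - k}

/-- `σ` is recognizable in `X`: every `y` has at most one centered `σ`-representation in `X`. -/
def RecIn (σ : A → List B) (X : Set (ℤ → A)) : Prop :=
  ∀ (y : ℤ → B) (k k' : ℤ) (x x' : ℤ → A), x ∈ X → x' ∈ X →
    IsCenteredRep σ y k x → IsCenteredRep σ y k' x' → k = k' ∧ x = x'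

/-- `σ` is recognizable in `X` for aperiodic points. -/
def RecInAp (σ : A → List B) (X : Set (ℤ → A)) : Prop :=
  ∀ y : ℤ → B, Aperiodic y → ∀ (k k' : ℤ) (x x' : ℤ → A), x ∈ X → x' ∈ X →
    IsCenteredRep σ y k x → IsCenteredRep σ y k' x' → k = k' ∧ x = x'

/-- `σ` is left permutative: the first letters of `σ a` and `σ b` differ for distinct `a, b`. -/
def LeftPermutative (σ : A → List B) : Prop :=
  ∀ a b : A, a ≠ b → (σ a).head? ≠ (σ b).head?

/-- `σ` is right permutative: the last letters of `σ a` and `σ b` differ for distinct `a, b`. -/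
def RightPermutative (σ : A → List B) : Prop :=
  ∀ a b : A, a ≠ b → (σ a).getLast? ≠ (σ b).getLast?

/-- `σ` and `σ'` are rotationally conjugate. -/
def RotConj (σ σ' : A → List B) : Prop :=
  ∃ w : List B, (∀ a, σ a ++ w = w ++ σ' a) ∨ (∀ a, w ++ σ a = σ' a ++ w)

/-- The incidence matrix of `σ`, over `ℚ`: entry `(b, a)` counts occurrences of `b` in `σ a`. -/
noncomputable def incidence (σ : A → List B) [DecidableEq B] : Matrix B A ℚ :=
  Matrix.of fun b a => ((σ a).count b : ℚ)

/-- The finite subword `x_[i, i+m)` of a bi-infinite sequence. -/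
def factor (x : ℤ → A) (i : ℤ) (m : ℕ) : List A := (List.range m).map fun j => x (i + j)

/-- The language of a bi-infinite sequence: the set of its finite subwords. -/
def lang (x : ℤ → A) : Set (List A) := {w | ∃ (i : ℤ) (m : ℕ), w = factor x i m}

/-- `σ` is injective on bi-infinite sequences. -/
def InjZ (σ : A → List B) : Prop :=
  ∀ (x x' : ℤ → A) (y : ℤ → B), IsSubstPt σ x y → IsSubstPt σ x' y → x = x'

/-- Cutting points for one-sided sequences. -/
def cutN (σ : A → List B) (x : ℕ → A) (ℓ : ℕ) : ℕ :=
  ∑ i ∈ Finset.range ℓ, (σ (x i)).length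

/-- `y` is the one-sided image `σ(x)` for `x : ℕ → A`. -/
def IsSubstPtN (σ : A → List B) (x : ℕ → A) (y : ℕ → B) : Prop :=
  ∀ (ℓ j : ℕ) (hj : j < (σ (x ℓ)).length),
    y (cutN σ x ℓ + j) = (σ (x ℓ)).get ⟨j, hj⟩

/-- `σ` is injective on one-sided (right-infinite) sequences. -/
def InjN (σ : A → List B) : Prop :=
  ∀ (x x' : ℕ → A) (y : ℕ → B), IsSubstPtN σ x y → IsSubstPtN σ x' y → x = x'

/-- The total length `⦀σ⦀ = Σ_a |σ a|`. -/
def totalLen (σ : A → List B) [Fintype A] : ℕ := ∑ a, (σ a).length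

/-- `X` is invariant under the two-sided shift. -/
def ShiftInvariant (X : Set (ℤ → A)) : Prop :=
  ∀ x ∈ X, (fun n => x (n + 1)) ∈ X ∧ (fun n => x (n - 1)) ∈ X

/-- The iterate `σ^n` of a substitution, applied to a letter. -/
def iter (σ : A → List A) : ℕ → A → List A
  | 0, a => [a]
  | n + 1, a => wordApply (iter σ n) (σ a)

/-- The language `ℒ_σ` of a substitution: subwords of the `σ^n(a)`. -/
def subLang (σ : A → List A) : Set (List A) := {w | ∃ (n : ℕ) (a : A), w <:+: iter σ n a}

/-- The substitutive shift `X_σ`. -/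
def subX (σ : A → List A) : Set (ℤ → A) := {x | ∀ w ∈ lang x, w ∈ subLang σ}

/-- `σ` is recognizable in the sense of Mossé for `x`. -/
def MosseRec (σ : A → List B) (x : ℤ → A) : Prop :=
  ∃ ℓ : ℕ, ∀ y : ℤ → B, IsSubstPt σ x y →
    ∀ m ∈ cutSet σ x 0, ∀ m' : ℤ,
      factor y (m - ℓ) (2 * ℓ) = factor y (m' - ℓ) (2 * ℓ) → m' ∈ cutSet σ x 0

section Sadic

variable {𝒜 : ℕ → Type*}

/-- `block σ N = σ_[0,N)`, mapping a letter of `𝒜 N` to a word over `𝒜 0`. -/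
def block (σ : ∀ n, 𝒜 (n + 1) → List (𝒜 n)) : ∀ N, 𝒜 N → List (𝒜 0)
  | 0, a => [a]
  | N + 1, a => wordApply (block σ N) (σ N a)

/-- `blockFrom σ n k = σ_[n,n+k)`, mapping a letter of `𝒜 (n+k)` to a word over `𝒜 n`. -/
def blockFrom (σ : ∀ n, 𝒜 (n + 1) → List (𝒜 n)) (n k : ℕ) : 𝒜 (n + k) → List (𝒜 n) :=
  block (𝒜 := fun m => 𝒜 (n + m)) (fun m => σ (n + m)) k

/-- The language `ℒ^(n)_σ` of a directive sequence. -/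
def sadicLang (σ : ∀ n, 𝒜 (n + 1) → List (𝒜 n)) (n : ℕ) : Set (List (𝒜 n)) :=
  {w | ∃ (k : ℕ) (a : 𝒜 (n + k)), 1 ≤ k ∧ w <:+: blockFrom σ n k a}

/-- The shift `X^(n)_σ` of a directive sequence. -/
def sadicX (σ : ∀ n, 𝒜 (n + 1) → List (𝒜 n)) (n : ℕ) : Set (ℤ → 𝒜 n) :=
  {x | ∀ w ∈ lang x, w ∈ sadicLang σ n}

/-- A directive sequence is everywhere growing if `min_a |σ_[0,n)(a)| → ∞`. -/
def EverywhereGrowing (σ : ∀ n, 𝒜 (n + 1) → List (𝒜 n)) : Prop :=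
  ∀ m : ℕ, ∃ N : ℕ, ∀ n ≥ N, ∀ a : 𝒜 n, m ≤ (block σ n a).length

end Sadic

end Recog

/-!
Suppose `σ x = σ x'` with `x ≠ x'`. The two preimages differ at a nonnegative index or at a
negative one; reading the negative half backwards (and reversing every `σ a`), `σ` or its
reversal is not injective on one-sided sequences. The defect theorem then puts every `σ a` in
`S*` for a set `S` of fewer than `|A|` words. It is proved by induction on `∑ₐ |σ a|`: at the first
index where two one-sided preimages differ, with letters `a ≠ b`, one of `σ a`, `σ b` is a prefix
of the other. If `σ a = σ b`, drop `σ a`; if `σ b = σ a s`, then `σ = τ ∘ (b ↦ ab)` with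
`τ b = s`, and the images of the two preimages under `b ↦ ab` are distinct `τ`-preimages of one
sequence, so the shorter `τ` is again not injective.

Each column of `M_σ` is then a sum of letter-count vectors of words of `S`, so
`rk M_σ ≤ |S| < |A|`. If `|A| = 2`, then `S ⊆ {z}`, every `σ a` is a power of `z`, and every
image of `σ` is the periodic point `⋯zz.zz⋯`.
-/

namespace Recog

open List

variable {A B C : Type*}

def PrefixOf (u : List B) (z : ℕ → B) : Prop := ∀ i (hi : i < u.length), u[i] = z i

theorem PrefixOf.of_prefix {u v : List B} {z : ℕ → B} (hv : PrefixOf v z) (huv : u <+: v) :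
    PrefixOf u z :=
  fun i hi => (huv.getElem hi).trans (hv i (hi.trans_le huv.length_le))

theorem PrefixOf.prefix_of_length_le {u v : List B} {z : ℕ → B} (hu : PrefixOf u z)
    (hv : PrefixOf v z) (h : u.length ≤ v.length) : u <+: v := by
  refine prefix_iff_eq_take.2 (ext_getElem (by simp [h]) fun i hi _ => ?_)
  rw [getElem_take, hu i hi, hv i (by omega)]

theorem PrefixOf.prefix_or_prefix {u v : List B} {z : ℕ → B} (hu : PrefixOf u z)
    (hv : PrefixOf v z) : u <+: v ∨ v <+: u :=
  (le_total u.length v.length).imp (hu.prefix_of_length_le hv) (hv.prefix_of_length_le hu)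

theorem prefixOf_append {u v : List B} {z : ℕ → B} :
    PrefixOf (u ++ v) z ↔ PrefixOf u z ∧ PrefixOf v fun j => z (u.length + j) := by
  refine ⟨fun h => ⟨h.of_prefix (prefix_append u v), fun j hj => ?_⟩, fun ⟨hu, hv⟩ i hi => ?_⟩
  · show v[j] = z (u.length + j)
    rw [← h (u.length + j) (by rw [length_append]; omega), getElem_append_right (by omega)]
    simp
  · rw [length_append] at hi
    by_cases hiu : i < u.length
    · rw [getElem_append_left hiu, hu i hiu]
    · rw [getElem_append_right (by omega), hv (i - u.length) (by omega)]
      exact congrArg z (by omega)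

theorem isSubstPtN_iff_prefixOf (σ : A → List B) (ξ : ℕ → A) (z : ℕ → B) :
    IsSubstPtN σ ξ z ↔ ∀ n, PrefixOf (σ (ξ n)) fun j => z (cutN σ ξ n + j) := by
  simp only [IsSubstPtN, PrefixOf, get_eq_getElem, eq_comm]

theorem cutN_succ (σ : A → List B) (ξ : ℕ → A) (n : ℕ) :
    cutN σ ξ (n + 1) = cutN σ ξ n + (σ (ξ n)).length :=
  Finset.sum_range_succ _ _

theorem wordApply_eq_flatMap (σ : A → List B) (w : List A) : wordApply σ w = w.flatMap σ := by
  induction w with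
  | nil => rfl
  | cons a w ih => rw [wordApply, ih, flatMap_cons]

theorem wordApply_comp (τ : B → List C) (σ : A → List B) (w : List A) :
    wordApply (comp τ σ) w = wordApply τ (wordApply σ w) := by
  have : comp τ σ = fun a => (σ a).flatMap τ := funext fun a => wordApply_eq_flatMap τ (σ a)
  rw [this, wordApply_eq_flatMap, wordApply_eq_flatMap, wordApply_eq_flatMap, flatMap_assoc]

def imagePrefix (σ : A → List B) (ξ : ℕ → A) (N : ℕ) : List B :=
  wordApply σ ((range N).map ξ)

theorem imagePrefix_succ (σ : A → List B) (ξ : ℕ → A) (N : ℕ) :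
    imagePrefix σ ξ (N + 1) = imagePrefix σ ξ N ++ σ (ξ N) := by
  simp [imagePrefix, wordApply_eq_flatMap, range_succ]

theorem length_imagePrefix (σ : A → List B) (ξ : ℕ → A) (N : ℕ) :
    (imagePrefix σ ξ N).length = cutN σ ξ N := by
  induction N with
  | zero => rfl
  | succ N ih => rw [imagePrefix_succ, length_append, ih, cutN_succ]

theorem imagePrefix_prefix_of_le (σ : A → List B) (ξ : ℕ → A) {N N' : ℕ} (h : N ≤ N') :
    imagePrefix σ ξ N <+: imagePrefix σ ξ N' := by
  induction N', h using Nat.le_induction with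
  | base => exact prefix_refl _
  | succ N' _ ih => exact ih.trans (imagePrefix_succ σ ξ N' ▸ prefix_append _ _)

theorem isSubstPtN_iff_imagePrefix (σ : A → List B) (ξ : ℕ → A) (z : ℕ → B) :
    IsSubstPtN σ ξ z ↔ ∀ N, PrefixOf (imagePrefix σ ξ N) z := by
  have key : ∀ N, PrefixOf (imagePrefix σ ξ N) z ↔
      ∀ n < N, PrefixOf (σ (ξ n)) fun j => z (cutN σ ξ n + j) := by
    intro N
    induction N with
    | zero => simp [imagePrefix, wordApply, PrefixOf]
    | succ N ih =>
      rw [imagePrefix_succ, prefixOf_append, ih, length_imagePrefix, Nat.forall_lt_succ_right]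
  rw [isSubstPtN_iff_prefixOf]
  simp only [key]
  exact ⟨fun h N n _ => h n, fun h n => h (n + 1) n n.lt_succ_self⟩

theorem le_cutN {σ : A → List B} (hσ : NonErasing σ) (ξ : ℕ → A) (N : ℕ) : N ≤ cutN σ ξ N := by
  rw [cutN]
  calc N = ∑ _ ∈ Finset.range N, 1 := by simp
    _ ≤ _ := Finset.sum_le_sum fun n _ => length_pos_iff.2 (hσ (ξ n))

theorem exists_isSubstPtN {σ : A → List B} (hσ : NonErasing σ) (ξ : ℕ → A) :
    ∃ z, IsSubstPtN σ ξ z := by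
  have hlen (m : ℕ) : m < (imagePrefix σ ξ (m + 1)).length := by
    rw [length_imagePrefix]; exact le_cutN hσ ξ (m + 1)
  refine ⟨fun m => (imagePrefix σ ξ (m + 1))[m]'(hlen m),
    (isSubstPtN_iff_imagePrefix σ ξ _).2 fun N i hi => ?_⟩
  rcases le_total N (i + 1) with h | h
  · exact (imagePrefix_prefix_of_le σ ξ h).getElem hi
  · exact ((imagePrefix_prefix_of_le σ ξ h).getElem (hlen i)).symm

theorem IsSubstPtN.of_comp {τ : B → List C} {ρ : A → List B} (hρ : NonErasing ρ) {ξ : ℕ → A}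
    {Ξ : ℕ → B} {z : ℕ → C} (hΞ : IsSubstPtN ρ ξ Ξ) (hz : IsSubstPtN (comp τ ρ) ξ z) :
    IsSubstPtN τ Ξ z := by
  rw [isSubstPtN_iff_imagePrefix] at hΞ hz ⊢
  intro M
  have hpre : (range M).map Ξ <+: imagePrefix ρ ξ M :=
    PrefixOf.prefix_of_length_le (fun i hi => by simp) (hΞ M)
      (by simpa [length_imagePrefix] using le_cutN hρ ξ M)
  refine (hz M).of_prefix ?_
  rw [imagePrefix, imagePrefix, wordApply_comp, wordApply_eq_flatMap τ, wordApply_eq_flatMap τ]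
  exact hpre.flatMap τ

theorem cutN_congr (σ : A → List B) {ξ ξ' : ℕ → A} {n : ℕ} (h : ∀ m < n, ξ m = ξ' m) :
    cutN σ ξ n = cutN σ ξ' n :=
  Finset.sum_congr rfl fun m hm => by rw [h m (Finset.mem_range.1 hm)]

theorem exists_first_diff_of_not_injN {σ : A → List B} (h : ¬ InjN σ) :
    ∃ (ξ ξ' : ℕ → A) (z : ℕ → B) (n : ℕ), IsSubstPtN σ ξ z ∧ IsSubstPtN σ ξ' z ∧
      (∀ m < n, ξ m = ξ' m) ∧ ξ n ≠ ξ' n ∧ σ (ξ n) <+: σ (ξ' n) := by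
  classical
  simp only [InjN, not_forall] at h
  obtain ⟨ξ, ξ', z, hξ, hξ', hne⟩ := h
  have hex : ∃ n, ξ n ≠ ξ' n := Function.ne_iff.1 hne
  have hagree : ∀ m < Nat.find hex, ξ m = ξ' m := fun m hm => not_not.1 (Nat.find_min hex hm)
  have hblock := (isSubstPtN_iff_prefixOf σ ξ z).1 hξ (Nat.find hex)
  have hblock' := (isSubstPtN_iff_prefixOf σ ξ' z).1 hξ' (Nat.find hex)
  rw [← cutN_congr σ hagree] at hblock'
  rcases hblock.prefix_or_prefix hblock' with hp | hp
  · exact ⟨ξ, ξ', z, _, hξ, hξ', hagree, Nat.find_spec hex, hp⟩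
  · exact ⟨ξ', ξ, z, _, hξ', hξ, fun m hm => (hagree m hm).symm, Ne.symm (Nat.find_spec hex), hp⟩

section Elementary

variable [DecidableEq A]

def elemMorphism (a b : A) : A → List A := Function.update (fun c => [c]) b [a, b]

theorem elemMorphism_of_ne {a b c : A} (hc : c ≠ b) : elemMorphism a b c = [c] :=
  Function.update_of_ne hc _ _

theorem elemMorphism_self (a b : A) : elemMorphism a b b = [a, b] := Function.update_self _ _ _

theorem elemMorphism_nonErasing (a b : A) : NonErasing (elemMorphism a b) := by
  intro c
  by_cases hc : c = b
  · rw [hc, elemMorphism_self]; simp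
  · rw [elemMorphism_of_ne hc]; simp

theorem comp_update_elemMorphism {σ : A → List B} {a b : A} {s : List B} (hab : a ≠ b)
    (hs : σ b = σ a ++ s) : comp (Function.update σ b s) (elemMorphism a b) = σ := by
  funext c
  by_cases hc : c = b
  · subst hc
    simp [comp, elemMorphism_self, wordApply, hab, hs]
  · simp [comp, elemMorphism_of_ne hc, wordApply, hc]

theorem head_elemMorphism_ne {a b : A} (hab : a ≠ b) {ξ Ξ : ℕ → A}
    (hΞ : IsSubstPtN (elemMorphism a b) ξ Ξ) (n : ℕ) : Ξ (cutN (elemMorphism a b) ξ n) ≠ b := by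
  have h0 := hΞ n 0 (length_pos_iff.2 (elemMorphism_nonErasing a b (ξ n)))
  rw [add_zero] at h0
  rw [h0]
  by_cases hc : ξ n = b
  · simpa [hc, elemMorphism_self] using hab
  · simpa [elemMorphism_of_ne hc] using hc

theorem not_injN_update_of_eq_append {σ : A → List B} {ξ ξ' : ℕ → A} {z : ℕ → B} {n : ℕ}
    (hξ : IsSubstPtN σ ξ z) (hξ' : IsSubstPtN σ ξ' z) (hagree : ∀ m < n, ξ m = ξ' m)
    {a b : A} (ha : ξ n = a) (hb : ξ' n = b) (hab : a ≠ b) {s : List B}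
    (hs : σ b = σ a ++ s) : ¬ InjN (Function.update σ b s) := by
  have hρ := elemMorphism_nonErasing a b
  have hcomp := comp_update_elemMorphism hab hs
  obtain ⟨Ξ, hΞ⟩ := exists_isSubstPtN hρ ξ
  obtain ⟨Ξ', hΞ'⟩ := exists_isSubstPtN hρ ξ'
  intro hinj
  have hEq : Ξ = Ξ' := by
    rw [← hcomp] at hξ hξ'
    exact hinj Ξ Ξ' z (hΞ.of_comp hρ hξ) (hΞ'.of_comp hρ hξ')
  -- Where `Ξ'` reads the `b` of its block `ab`, `Ξ` has finished its one-letter block `a` and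
  -- starts a new block; no block of `elemMorphism a b` starts with `b`.
  have hP : cutN (elemMorphism a b) ξ (n + 1) = cutN (elemMorphism a b) ξ n + 1 := by
    rw [cutN_succ, ha, elemMorphism_of_ne hab]; rfl
  have h1 : Ξ' (cutN (elemMorphism a b) ξ n + 1) = b := by
    have := hΞ' n 1 (by rw [hb, elemMorphism_self]; simp)
    simpa [← cutN_congr _ hagree, hb, elemMorphism_self] using this
  exact head_elemMorphism_ne hab hΞ (n + 1) (by rw [hP, hEq, h1])

end Elementary

def FactorsOver (S : Finset (List B)) (w : List B) : Prop :=
  ∃ L : List (List B), (∀ v ∈ L, v ∈ S) ∧ L.flatten = w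

theorem FactorsOver.of_mem {S : Finset (List B)} {w : List B} (h : w ∈ S) : FactorsOver S w :=
  ⟨[w], by simpa using h, flatten_singleton⟩

theorem FactorsOver.flatten {S : Finset (List B)} {l : List (List B)}
    (h : ∀ w ∈ l, FactorsOver S w) : FactorsOver S l.flatten := by
  induction l with
  | nil => exact ⟨[], by simp, rfl⟩
  | cons w l ih =>
    obtain ⟨L, hL, hw⟩ := h w mem_cons_self
    obtain ⟨L', hL', hl⟩ := ih fun v hv => h v (mem_cons_of_mem w hv)
    refine ⟨L ++ L', fun v hv => ?_, by rw [flatten_append, hl, hw, flatten_cons]⟩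
    exact (mem_append.1 hv).elim (hL v) (hL' v)

theorem FactorsOver.wordApply {S : Finset (List B)} {τ : A → List B}
    (h : ∀ a, FactorsOver S (τ a)) (w : List A) : FactorsOver S (wordApply τ w) := by
  rw [wordApply_eq_flatMap, flatMap_def]
  exact .flatten fun v hv => by
    obtain ⟨a, -, rfl⟩ := mem_map.1 hv
    exact h a

theorem FactorsOver.reverse [DecidableEq B] {S : Finset (List B)} {w : List B}
    (h : FactorsOver S w) : FactorsOver (S.image List.reverse) w.reverse := by
  obtain ⟨L, hL, rfl⟩ := h
  refine ⟨(L.map List.reverse).reverse, fun v hv => ?_, by rw [reverse_flatten]⟩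
  obtain ⟨u, hu, rfl⟩ := mem_map.1 (mem_reverse.1 hv)
  exact Finset.mem_image_of_mem _ (hL u hu)

def Defective [Fintype A] (σ : A → List B) : Prop :=
  ∃ S : Finset (List B), S.card < Fintype.card A ∧ ∀ a, FactorsOver S (σ a)

theorem defective_of_eq [Fintype A] [DecidableEq B] {σ : A → List B} {a b : A} (hab : a ≠ b)
    (h : σ a = σ b) : Defective σ := by
  classical
  refine ⟨(Finset.univ.erase a).image σ, ?_, fun c => .of_mem ?_⟩
  · calc _ ≤ (Finset.univ.erase a).card := Finset.card_image_le
      _ < Fintype.card A := Finset.card_erase_lt_of_mem (Finset.mem_univ a)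
  · by_cases hc : c = a
    · exact Finset.mem_image.2 ⟨b, by simp [hab.symm], hc ▸ h.symm⟩
    · exact Finset.mem_image.2 ⟨c, by simp [hc], rfl⟩

theorem Defective.comp [Fintype A] {τ : A → List B} (h : Defective τ) (ρ : A → List A) :
    Defective (comp τ ρ) :=
  let ⟨S, hcard, hS⟩ := h
  ⟨S, hcard, fun c => .wordApply hS (ρ c)⟩

theorem Defective.of_reverse [Fintype A] [DecidableEq B] {σ : A → List B}
    (h : Defective fun a => (σ a).reverse) : Defective σ := by
  obtain ⟨S, hcard, hS⟩ := h
  exact ⟨S.image List.reverse, Finset.card_image_le.trans_lt hcard,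
    fun a => by simpa using (hS a).reverse⟩

theorem totalLen_update_lt [Fintype A] [DecidableEq A] (σ : A → List B) {b : A} {s : List B}
    (h : s.length < (σ b).length) : totalLen (Function.update σ b s) < totalLen σ := by
  refine Finset.sum_lt_sum (fun c _ => ?_) ⟨b, Finset.mem_univ b, by simpa using h⟩
  rcases eq_or_ne c b with rfl | hc
  · simpa using h.le
  · simp [hc]

theorem defective_of_not_injN [Fintype A] [DecidableEq B] {σ : A → List B}
    (hσ : NonErasing σ) (h : ¬ InjN σ) : Defective σ := by
  classical
  induction hn : totalLen σ using Nat.strong_induction_on generalizing σ with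
  | _ t ih =>
  obtain ⟨ξ, ξ', z, n, hξ, hξ', hagree, hne, s, hs⟩ := exists_first_diff_of_not_injN h
  rcases eq_or_ne s [] with rfl | hs_ne
  · exact defective_of_eq hne (by simpa using hs)
  have hlt : s.length < (σ (ξ' n)).length := by
    rw [← hs, length_append, lt_add_iff_pos_left]; exact length_pos_iff.2 (hσ _)
  have hτ : NonErasing (Function.update σ (ξ' n) s) := fun c => by
    rcases eq_or_ne c (ξ' n) with rfl | hc
    · simpa using hs_ne
    · simpa [hc] using hσ c
  have hdef := ih _ (hn ▸ totalLen_update_lt σ hlt) hτ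
    (not_injN_update_of_eq_append hξ hξ' hagree rfl rfl hne hs.symm) rfl
  rw [← comp_update_elemMorphism hne hs.symm]
  exact hdef.comp _

theorem NonErasing.reverse {σ : A → List B} (hσ : NonErasing σ) :
    NonErasing fun a => (σ a).reverse :=
  fun a => by simpa using hσ a

theorem cut_natCast (σ : A → List B) (x : ℤ → A) (n : ℕ) :
    cut σ x n = cutN σ (fun m : ℕ => x m) n := by
  rw [cut, if_pos n.cast_nonneg, Int.toNat_natCast, cutN]
  push_cast
  rfl

theorem cut_neg_natCast (σ : A → List B) (x : ℤ → A) (n : ℕ) :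
    cut σ x (-n) = -cutN (fun a => (σ a).reverse) (fun m : ℕ => x (-1 - m)) n := by
  rcases eq_or_ne n 0 with rfl | hn
  · simp [cut, cutN]
  rw [cut, if_neg (by omega), neg_neg, Int.toNat_natCast, cutN]
  push_cast
  simp only [length_reverse, neg_sub_comm]

theorem IsSubstPt.restrict {σ : A → List B} {x : ℤ → A} {y : ℤ → B} (h : IsSubstPt σ x y) :
    IsSubstPtN σ (fun n : ℕ => x n) (fun n : ℕ => y n) := by
  intro n j hj
  simpa [cut_natCast] using h n j hj

theorem IsSubstPt.restrict_reverse {σ : A → List B} {x : ℤ → A} {y : ℤ → B}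
    (h : IsSubstPt σ x y) :
    IsSubstPtN (fun a => (σ a).reverse) (fun n : ℕ => x (-1 - n)) (fun n : ℕ => y (-1 - n)) := by
  intro n j hj
  dsimp only at hj ⊢
  set L := (σ (x (-1 - n))).length
  rw [length_reverse] at hj
  have key := h (-1 - n) (L - 1 - j) (by omega)
  have hcut := cut_neg_natCast σ x (n + 1)
  rw [cutN_succ, length_reverse, show -((n + 1 : ℕ) : ℤ) = -1 - n by push_cast; ring] at hcut
  rw [get_eq_getElem, hcut] at key
  rw [get_eq_getElem, getElem_reverse]
  convert key using 2
  push_cast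
  omega

theorem eq_of_eq_on_halves {α : Type*} {f g : ℤ → α}
    (h₁ : (fun n : ℕ => f n) = fun n : ℕ => g n)
    (h₂ : (fun n : ℕ => f (-1 - n)) = fun n : ℕ => g (-1 - n)) : f = g := by
  funext m
  rcases le_or_gt 0 m with hm | hm
  · simpa [Int.toNat_of_nonneg hm] using congrFun h₁ m.toNat
  · have := congrFun h₂ (-1 - m).toNat
    rwa [Int.toNat_of_nonneg (by omega), sub_sub_cancel] at this

theorem injZ_of_injN {σ : A → List B} (h₁ : InjN σ) (h₂ : InjN fun a => (σ a).reverse) :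
    InjZ σ := fun _ _ _ hx hx' =>
  eq_of_eq_on_halves (h₁ _ _ _ hx.restrict hx'.restrict)
    (h₂ _ _ _ hx.restrict_reverse hx'.restrict_reverse)

theorem defective_of_not_injZ [Fintype A] [DecidableEq B] {σ : A → List B}
    (hσ : NonErasing σ) (h : ¬ InjZ σ) : Defective σ := by
  by_contra hnd
  refine h (injZ_of_injN ?_ ?_) <;> by_contra hn
  · exact hnd (defective_of_not_injN hσ hn)
  · exact hnd (defective_of_not_injN hσ.reverse hn).of_reverse

theorem FactorsOver.mono {S T : Finset (List B)} (hST : S ⊆ T) {w : List B}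
    (h : FactorsOver S w) : FactorsOver T w :=
  let ⟨L, hL, hw⟩ := h
  ⟨L, fun v hv => hST (hL v hv), hw⟩

theorem factorsOver_singleton_iff {z w : List B} :
    FactorsOver {z} w ↔ ∃ k, (replicate k z).flatten = w := by
  refine ⟨fun ⟨L, hL, hw⟩ => ⟨L.length, ?_⟩, fun ⟨k, hw⟩ => ⟨replicate k z, by simp, hw⟩⟩
  rwa [← eq_replicate_iff.2 ⟨rfl, fun v hv => Finset.mem_singleton.1 (hL v hv)⟩]

theorem FactorsOver.prefix_or_prefix_of_singleton {z u v : List B}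
    (hu : FactorsOver {z} u) (hv : FactorsOver {z} v) : u <+: v ∨ v <+: u := by
  obtain ⟨k, rfl⟩ := factorsOver_singleton_iff.1 hu
  obtain ⟨k', rfl⟩ := factorsOver_singleton_iff.1 hv
  clear hu hv
  wlog h : k ≤ k' generalizing k k'
  · exact (this k' k (by omega)).symm
  left
  rw [← Nat.add_sub_cancel' h, replicate_add, flatten_append]
  exact prefix_append _ _

theorem Defective.rank_lt [Fintype A] [DecidableEq B] {σ : A → List B}
    (h : Defective σ) : (incidence σ).rank < Fintype.card A := by
  classical
  obtain ⟨S, hcard, hS⟩ := h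
  let π : List B → B → ℚ := fun w b => w.count b
  have hπ : ∀ w, FactorsOver S w → π w ∈ Submodule.span ℚ (S.image π : Set (B → ℚ)) := by
    rintro _ ⟨L, hL, rfl⟩
    have : π L.flatten = (L.map π).sum := by
      funext b
      simp [π, count_flatten, Pi.list_sum_apply, Function.comp_def]
    rw [this]
    refine list_sum_mem fun v hv => ?_
    obtain ⟨w, hw, rfl⟩ := mem_map.1 hv
    exact Submodule.subset_span (Finset.mem_image_of_mem π (hL w hw))
  rw [Matrix.rank_eq_finrank_span_cols]
  calc _ ≤ Module.finrank ℚ (Submodule.span ℚ (S.image π : Set (B → ℚ))) :=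
        Submodule.finrank_mono (Submodule.span_le.2 (Set.range_subset_iff.2 fun a => hπ _ (hS a)))
    _ ≤ (S.image π).card := finrank_span_finset_le_card _
    _ ≤ S.card := Finset.card_image_le
    _ < _ := hcard

theorem IsSubstPtN.eq_of_factorsOver_singleton {σ : A → List B} (hσ : NonErasing σ)
    {z : List B} (hz : ∀ a, FactorsOver {z} (σ a)) {ξ ξ' : ℕ → A} {w w' : ℕ → B}
    (h : IsSubstPtN σ ξ w) (h' : IsSubstPtN σ ξ' w') : w = w' := by
  have hfac (ξ : ℕ → A) (N : ℕ) : FactorsOver {z} (imagePrefix σ ξ N) := .wordApply hz _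
  have hlen (ξ : ℕ → A) (m : ℕ) : m < (imagePrefix σ ξ (m + 1)).length := by
    rw [length_imagePrefix]; exact le_cutN hσ ξ (m + 1)
  rw [isSubstPtN_iff_imagePrefix] at h h'
  funext m
  rw [← h (m + 1) m (hlen ξ m), ← h' (m + 1) m (hlen ξ' m)]
  rcases (hfac ξ (m + 1)).prefix_or_prefix_of_singleton (hfac ξ' (m + 1)) with hp | hp
  · exact hp.getElem _
  · exact (hp.getElem _).symm

theorem IsSubstPt.eq_of_factorsOver_singleton [DecidableEq B] {σ : A → List B}
    (hσ : NonErasing σ) {z : List B} (hz : ∀ a, FactorsOver {z} (σ a)) {x x' : ℤ → A}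
    {y y' : ℤ → B} (h : IsSubstPt σ x y) (h' : IsSubstPt σ x' y') : y = y' := by
  have hz' (a : A) : FactorsOver {z.reverse} (σ a).reverse := by
    simpa using (hz a).reverse
  exact eq_of_eq_on_halves (h.restrict.eq_of_factorsOver_singleton hσ hz h'.restrict)
    (h.restrict_reverse.eq_of_factorsOver_singleton hσ.reverse hz' h'.restrict_reverse)

theorem Defective.factorsOver_singleton_of_card_eq_two [Fintype A] {σ : A → List B}
    (h : Defective σ) (hA : Fintype.card A = 2) : ∃ z, ∀ a, FactorsOver {z} (σ a) := by
  obtain ⟨S, hcard, hS⟩ := h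
  obtain ⟨z, hz⟩ := Finset.card_le_one_iff_subset_singleton.1 (show S.card ≤ 1 by omega)
  exact ⟨z, fun a => (hS a).mono hz⟩

end Recog

open Recog in
theorem stmt15_general {A B : Type*} [Fintype A] [DecidableEq B]
    (σ : A → List B) (hσ : NonErasing σ)
    (hcond : (incidence σ).rank = Fintype.card A ∨
      (Fintype.card A = 2 ∧ ∃ y y' : ℤ → B, y ≠ y' ∧
        (∃ x : ℤ → A, IsSubstPt σ x y) ∧ (∃ x' : ℤ → A, IsSubstPt σ x' y'))) :
    InjZ σ := by
  by_contra hinj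
  have hdef := defective_of_not_injZ hσ hinj
  rcases hcond with hrank | ⟨hA, y, y', hne, ⟨x, hx⟩, ⟨x', hx'⟩⟩
  · exact hdef.rank_lt.ne hrank
  · obtain ⟨z, hz⟩ := hdef.factorsOver_singleton_of_card_eq_two hA
    exact hne (hx.eq_of_factorsOver_singleton hσ hz hx')

open Recog in
/-- If `rk M_σ = |𝒜|`, or `|𝒜| = 2` and `σ(𝒜^ℤ)` contains at least two points,
then `σ` is injective on `𝒜^ℤ`. -/
theorem stmt15 {A B : Type*} [Fintype A] [Fintype B] [DecidableEq B]
    (σ : A → List B) (hσ : NonErasing σ)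
    (hcond : (incidence σ).rank = Fintype.card A ∨
      (Fintype.card A = 2 ∧ ∃ y y' : ℤ → B, y ≠ y' ∧
        (∃ x : ℤ → A, IsSubstPt σ x y) ∧ (∃ x' : ℤ → A, IsSubstPt σ x' y'))) :
    InjZ σ :=
  stmt15_general σ hσ hcond
end

section
/- Let σ: 𝒜 → ℬ⁺ be a non-erasing morphism between finite alphabets, and let (k,x), (k',x') be centered σ-representations of some y ∈ ℬ^ℤ. If T^ℓ(x) = T^{ℓ'}(x') and the ℓ-th σ-cutting point of (k,x) coincides with the ℓ'-th σ-cutting point of (k',x') for some ℓ, ℓ' ∈ ℤ, then (k,x) = (k',x'). -/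
open scoped BigOperators

/-!
Both representations read the same sequence, `x' = T^d x` with `d = ℓ' - ℓ`, so their cutting
points differ by the constant `cut σ x' d`, which the common cutting point identifies with
`k' - k`. Centering puts `k' - k` strictly between `-|σ(x' d)|` and `|σ(x' 0)|`, and no cutting
point of index `d ≠ 0` lies in that window; hence `d = 0` and `k = k'`.
-/

namespace Recog

variable {A B : Type*} (σ : A → List B)

@[simp]
lemma cut_zero (x : ℤ → A) : cut σ x 0 = 0 := by
  simp [cut]

lemma cut_add_one (x : ℤ → A) (n : ℤ) :
    cut σ x (n + 1) = cut σ x n + ((σ (x n)).length : ℤ) := by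
  unfold cut
  rcases le_or_gt 0 n with hn | hn
  · rw [if_pos hn, if_pos (by omega), show (n + 1).toNat = n.toNat + 1 by omega,
      Finset.sum_range_succ, Int.toNat_of_nonneg hn]
  · obtain rfl | hn' := eq_or_lt_of_le (show n ≤ -1 by omega)
    · simp
    · rw [if_neg (by omega), if_neg (by omega), show (-n).toNat = (-(n + 1)).toNat + 1 by omega,
        Finset.sum_range_succ, show -(((-(n + 1)).toNat : ℕ) : ℤ) - 1 = n by omega]
      ring

lemma cut_add_of_shift {x x' : ℤ → A} {d : ℤ} (hx : ∀ n, x' (n + d) = x n) (n : ℤ) :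
    cut σ x' (n + d) = cut σ x n + cut σ x' d := by
  induction n using Int.induction_on with
  | zero => simp
  | succ n ih =>
    rw [show (n : ℤ) + 1 + d = n + d + 1 by ring, cut_add_one, cut_add_one, hx, ih]
    ring
  | pred n ih =>
    have h' := cut_add_one σ x' (-(n : ℤ) - 1 + d)
    have h := cut_add_one σ x (-(n : ℤ) - 1)
    rw [show -(n : ℤ) - 1 + d + 1 = -n + d by ring, hx, ih] at h'
    rw [show -(n : ℤ) - 1 + 1 = -n by ring] at h
    linarith

lemma length_le_cut (x : ℤ → A) {d : ℤ} (hd : 1 ≤ d) :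
    ((σ (x 0)).length : ℤ) ≤ cut σ x d := by
  rw [cut, if_pos (by omega)]
  simpa using Finset.single_le_sum (f := fun i : ℕ => ((σ (x i)).length : ℤ))
    (fun i _ => by positivity) (Finset.mem_range.mpr (show 0 < d.toNat by omega))

lemma cut_le_neg_length (x : ℤ → A) {d : ℤ} (hd : d ≤ -1) :
    cut σ x d ≤ -((σ (x d)).length : ℤ) := by
  rw [cut, if_neg (by omega)]
  have h := Finset.single_le_sum (f := fun i : ℕ => ((σ (x (-(i : ℤ) - 1))).length : ℤ))
    (fun i _ => by positivity) (Finset.mem_range.mpr (show (-d).toNat - 1 < (-d).toNat by omega))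
  rw [show -(((-d).toNat - 1 : ℕ) : ℤ) - 1 = d by omega] at h
  omega

lemma eq_zero_of_neg_length_lt_cut_lt_length (x : ℤ → A) {d : ℤ}
    (hlow : -((σ (x d)).length : ℤ) < cut σ x d) (hhigh : cut σ x d < (σ (x 0)).length) :
    d = 0 := by
  by_contra hd
  rcases lt_or_gt_of_ne hd with hd | hd
  · linarith [cut_le_neg_length σ x (show d ≤ -1 by omega)]
  · linarith [length_le_cut σ x (show 1 ≤ d by omega)]

end Recog

open Recog in
theorem stmt16_general {A B : Type*}
    (σ : A → List B) (y : ℤ → B)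
    (k k' : ℤ) (x x' : ℤ → A) (ℓ ℓ' : ℤ)
    (h1 : IsCenteredRep σ y k x) (h2 : IsCenteredRep σ y k' x')
    (hshift : (fun i => x (i + ℓ)) = fun i => x' (i + ℓ'))
    (hcut : cut σ x ℓ - k = cut σ x' ℓ' - k') :
    k = k' ∧ x = x' := by
  obtain ⟨-, hk, hkx⟩ := h1
  obtain ⟨-, hk', hkx'⟩ := h2
  have hx : ∀ n, x' (n + (ℓ' - ℓ)) = x n := fun n => by
    rw [show n + (ℓ' - ℓ) = n - ℓ + ℓ' by ring]
    simpa using (congrFun hshift (n - ℓ)).symm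
  have hd : cut σ x' (ℓ' - ℓ) = k' - k := by
    have h := cut_add_of_shift σ hx ℓ
    rw [add_sub_cancel] at h
    linarith
  have hx0 := hx 0
  rw [zero_add] at hx0
  have hd0 : ℓ' - ℓ = 0 :=
    eq_zero_of_neg_length_lt_cut_lt_length σ x' (by rw [hd, hx0]; omega) (by omega)
  rw [hd0, cut_zero] at hd
  exact ⟨by omega, funext fun n => by rw [← hx n, hd0, add_zero]⟩

open Recog in
/-- Two centered σ-representations of `y` whose sequences agree along a shift
and which share corresponding cutting points are equal. -/
theorem stmt16 {A B : Type*} [Fintype A] [Fintype B]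
    (σ : A → List B) (hσ : NonErasing σ) (y : ℤ → B)
    (k k' : ℤ) (x x' : ℤ → A) (ℓ ℓ' : ℤ)
    (h1 : IsCenteredRep σ y k x) (h2 : IsCenteredRep σ y k' x')
    (hshift : (fun i => x (i + ℓ)) = fun i => x' (i + ℓ'))
    (hcut : cut σ x ℓ - k = cut σ x' ℓ' - k') :
    k = k' ∧ x = x' :=
  stmt16_general σ y k k' x x' ℓ ℓ' h1 h2 hshift hcut
end
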